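/- Suppose Λ(x) and Λ(y) are positive definite, set s := −g(y), and suppose ‖x − y‖_x ≤ r for some real r with 0 ≤ r < 1/3. Define the Newton iterate x₊ := 2x − H(x)⁻¹·s. Then Λ(x₊) is positive definite and ‖x₊ − y‖_{x₊} ≤ r²/(1 − 2r). -/

import Mathlib

/-!
Congruence by `W = Λ(x)^{-1/2}` changes neither `g`, nor `H`, nor the local norms, so one may
assume `Λ(x) = 1`. Then `zᵀ H(x) w = tr(Λ(z) Λ(w))` is the Frobenius inner product, and the
Newton equation `H(x) v = s` says that `Λ(v)` is the Frobenius-orthogonal projection of `G⁻¹`,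
`G = Λ(y)`, onto the range of `Λ`. Hence `D = Λ(y - x₊) = G - Λ(x₊)`, which lies in that range, is
no longer than the residual `G⁻¹ + G - 2 = G⁻¹ (1 - G)²`; as `‖1 - G‖_F = ‖x - y‖_x ≤ r` and
`G ⪰ 1 - r`, this gives `‖D‖_F ≤ r² / (1 - r)`. So `Λ(x₊) = G - D ⪰ (1 - 2r) / (1 - r)`, and
`‖x₊ - y‖²_{x₊} = tr(Λ(x₊)⁻¹ D Λ(x₊)⁻¹ D) ≤ ((1 - r) / (1 - 2r))² ‖D‖²_F ≤ (r² / (1 - 2r))²`.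
-/

open Matrix

/-- The gradient of the barrier `f(x) = -log det Λ(x)`:
`g(x)_i = -tr(Λ(x)⁻¹ · Λ(e_i))` (with the total matrix inverse, `0` for singular matrices). -/
noncomputable def grad {U L : ℕ} (Lam : (Fin U → ℝ) →ₗ[ℝ] Matrix (Fin L) (Fin L) ℝ)
    (x : Fin U → ℝ) : Fin U → ℝ :=
  fun i => -((Lam x)⁻¹ * Lam (Pi.single i 1)).trace

/-- The Hessian of the barrier: `H(x)_{ij} = tr(Λ(x)⁻¹ Λ(e_i) Λ(x)⁻¹ Λ(e_j))`. -/
noncomputable def hess {U L : ℕ} (Lam : (Fin U → ℝ) →ₗ[ℝ] Matrix (Fin L) (Fin L) ℝ)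
    (x : Fin U → ℝ) : Matrix (Fin U) (Fin U) ℝ :=
  Matrix.of fun i j =>
    ((Lam x)⁻¹ * Lam (Pi.single i 1) * (Lam x)⁻¹ * Lam (Pi.single j 1)).trace

/-- The local norm `‖v‖_x = (vᵀ H(x) v)^{1/2}`. -/
noncomputable def locNorm {U L : ℕ} (Lam : (Fin U → ℝ) →ₗ[ℝ] Matrix (Fin L) (Fin L) ℝ)
    (x v : Fin U → ℝ) : ℝ :=
  Real.sqrt (v ⬝ᵥ (hess Lam x).mulVec v)

/-- The dual local norm `‖t‖*_x = (tᵀ H(x)⁻¹ t)^{1/2}`. -/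
noncomputable def dualNorm {U L : ℕ} (Lam : (Fin U → ℝ) →ₗ[ℝ] Matrix (Fin L) (Fin L) ℝ)
    (x t : Fin U → ℝ) : ℝ :=
  Real.sqrt (t ⬝ᵥ (hess Lam x)⁻¹.mulVec t)

open scoped MatrixOrder

namespace Matrix

section Congruence

variable {n α : Type*} [Fintype n] [DecidableEq n] [CommRing α]

lemma inv_conj_mul_conj {W : Matrix n n α} (hW : IsUnit W.det) (A B : Matrix n n α) :
    (W * A * W)⁻¹ * (W * B * W) = W⁻¹ * (A⁻¹ * B) * W := by
  rw [mul_inv_rev, mul_inv_rev]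
  simp only [Matrix.mul_assoc]
  rw [← Matrix.mul_assoc W⁻¹ W, nonsing_inv_mul _ hW, Matrix.one_mul]

lemma trace_inv_conj_mul_conj {W : Matrix n n α} (hW : IsUnit W.det) (A B : Matrix n n α) :
    ((W * A * W)⁻¹ * (W * B * W)).trace = (A⁻¹ * B).trace := by
  rw [inv_conj_mul_conj hW, trace_conj' ((isUnit_iff_isUnit_det W).mpr hW)]

lemma trace_inv_conj_mul_conj_mul_inv_conj_mul_conj {W : Matrix n n α} (hW : IsUnit W.det)
    (A B C : Matrix n n α) :
    ((W * A * W)⁻¹ * (W * B * W) * (W * A * W)⁻¹ * (W * C * W)).trace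
      = (A⁻¹ * B * A⁻¹ * C).trace := by
  rw [Matrix.mul_assoc _ (W * A * W)⁻¹, inv_conj_mul_conj hW, inv_conj_mul_conj hW]
  have : W⁻¹ * (A⁻¹ * B) * W * (W⁻¹ * (A⁻¹ * C) * W) = W⁻¹ * (A⁻¹ * B * A⁻¹ * C) * W := by
    simp only [Matrix.mul_assoc]
    rw [← Matrix.mul_assoc W W⁻¹, mul_nonsing_inv _ hW, Matrix.one_mul]
  rw [this, trace_conj' ((isUnit_iff_isUnit_det W).mpr hW)]

end Congruence

variable {m n : Type*}

lemma posDef_of_smul_one_le [DecidableEq n] {T : Matrix n n ℝ} {δ : ℝ} (hδ : 0 < δ)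
    (h : δ • 1 ≤ T) : T.PosDef := by
  simpa using (PosDef.one.smul hδ).add_posSemidef (le_iff.mp h)

variable [Fintype m] [Fintype n]

lemma mulVec_dotProduct_mulVec_le (A : Matrix m n ℝ) (u : n → ℝ) :
    A *ᵥ u ⬝ᵥ A *ᵥ u ≤ (Aᵀ * A).trace * (u ⬝ᵥ u) := by
  have hrow (i : m) : (A *ᵥ u) i * (A *ᵥ u) i ≤ (∑ j, A i j ^ 2) * (u ⬝ᵥ u) := by
    simpa [mulVec, dotProduct, ← sq] using Finset.sum_mul_sq_le_sq_mul_sq Finset.univ (A i) u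
  calc A *ᵥ u ⬝ᵥ A *ᵥ u ≤ ∑ i, (∑ j, A i j ^ 2) * (u ⬝ᵥ u) := Finset.sum_le_sum fun i _ => hrow i
    _ = (Aᵀ * A).trace * (u ⬝ᵥ u) := by
      rw [← Finset.sum_mul, trace, Finset.sum_comm]
      simp [mul_apply, sq]

lemma dotProduct_mulVec_sq_le (A : Matrix n n ℝ) (u : n → ℝ) :
    (u ⬝ᵥ A *ᵥ u) ^ 2 ≤ (Aᵀ * A).trace * (u ⬝ᵥ u) ^ 2 := by
  have hCS : (u ⬝ᵥ A *ᵥ u) ^ 2 ≤ (u ⬝ᵥ u) * (A *ᵥ u ⬝ᵥ A *ᵥ u) := by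
    simpa [dotProduct, ← sq] using Finset.sum_mul_sq_le_sq_mul_sq Finset.univ u (A *ᵥ u)
  have hu : 0 ≤ u ⬝ᵥ u := by simpa using dotProduct_star_self_nonneg u
  calc (u ⬝ᵥ A *ᵥ u) ^ 2 ≤ (u ⬝ᵥ u) * (A *ᵥ u ⬝ᵥ A *ᵥ u) := hCS
    _ ≤ (u ⬝ᵥ u) * ((Aᵀ * A).trace * (u ⬝ᵥ u)) :=
      mul_le_mul_of_nonneg_left (mulVec_dotProduct_mulVec_le A u) hu
    _ = (Aᵀ * A).trace * (u ⬝ᵥ u) ^ 2 := by ring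

lemma IsSymm.mul_self {A : Matrix n n ℝ} (hA : A.IsSymm) : (A * A).IsSymm := by
  rw [IsSymm, transpose_mul, hA.eq]

lemma IsSymm.mul_self_nonneg {A : Matrix n n ℝ} (hA : A.IsSymm) : 0 ≤ A * A := by
  simpa [nonneg_iff_posSemidef, hA.eq] using posSemidef_conjTranspose_mul_self A

lemma trace_mul_self_le_of_trace_mul_sub_eq_zero {D R : Matrix n n ℝ} (hDR : (D - R).IsSymm)
    (h : (D * (D - R)).trace = 0) : (D * D).trace ≤ (R * R).trace := by
  obtain ⟨K, rfl⟩ : ∃ K, R = D - K := ⟨D - R, (sub_sub_cancel D R).symm⟩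
  rw [sub_sub_cancel] at hDR h
  have hK := (nonneg_iff_posSemidef.mp hDR.mul_self_nonneg).trace_nonneg
  rw [sub_mul, mul_sub, mul_sub, trace_sub, trace_sub, trace_sub, trace_mul_comm K D, h]
  linarith

variable [DecidableEq n]

lemma PosDef.exists_isSymm_mul_mul_eq_one {A : Matrix n n ℝ} (hA : A.PosDef) :
    ∃ W : Matrix n n ℝ, W.IsSymm ∧ IsUnit W.det ∧ W * A * W = 1 := by
  obtain ⟨S, hS, hSsym⟩ : ∃ S : Matrix n n ℝ, S * S = A ∧ S.IsSymm :=
    ⟨CFC.sqrt A, CFC.sqrt_mul_sqrt_self A (nonneg_iff_posSemidef.mpr hA.posSemidef),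
      isHermitian_iff_isSymm.mp (nonneg_iff_posSemidef.mp (CFC.sqrt_nonneg A)).isHermitian⟩
  have hSdet : IsUnit S.det := by
    refine isUnit_iff_ne_zero.mpr fun h0 => hA.det_pos.ne' ?_
    rw [← hS, det_mul, h0, zero_mul]
  refine ⟨S⁻¹, hSsym.inv, isUnit_nonsing_inv_det _ hSdet, ?_⟩
  rw [← hS, ← Matrix.mul_assoc, nonsing_inv_mul _ hSdet, Matrix.one_mul, mul_nonsing_inv _ hSdet]

lemma le_smul_one_iff {A : Matrix n n ℝ} (hA : A.IsSymm) {c : ℝ} :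
    A ≤ c • 1 ↔ ∀ u, u ⬝ᵥ A *ᵥ u ≤ c * (u ⬝ᵥ u) := by
  simp [le_iff, posSemidef_iff_dotProduct_mulVec, (isSymm_one.smul c).sub hA, sub_mulVec,
    smul_mulVec, dotProduct_smul]

lemma smul_one_le_iff {A : Matrix n n ℝ} (hA : A.IsSymm) {c : ℝ} :
    c • 1 ≤ A ↔ ∀ u, c * (u ⬝ᵥ u) ≤ u ⬝ᵥ A *ᵥ u := by
  simp [le_iff, posSemidef_iff_dotProduct_mulVec, hA.sub (isSymm_one.smul c), sub_mulVec,
    smul_mulVec, dotProduct_smul]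

lemma le_smul_one_of_trace_mul_self_le {A : Matrix n n ℝ} (hA : A.IsSymm) {ρ : ℝ} (hρ : 0 ≤ ρ)
    (h : (A * A).trace ≤ ρ ^ 2) : A ≤ ρ • 1 := by
  refine (le_smul_one_iff hA).mpr fun u => ?_
  have hsq : (u ⬝ᵥ A *ᵥ u) ^ 2 ≤ (ρ * (u ⬝ᵥ u)) ^ 2 := by
    have := dotProduct_mulVec_sq_le A u
    rw [hA.eq] at this
    nlinarith [mul_le_mul_of_nonneg_right h (sq_nonneg (u ⬝ᵥ u))]
  have hu : 0 ≤ u ⬝ᵥ u := by simpa using dotProduct_star_self_nonneg u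
  exact (abs_le_of_sq_le_sq' hsq (by positivity)).2

lemma mul_self_le_trace_smul_one {A : Matrix n n ℝ} (hA : A.IsSymm) :
    A * A ≤ (A * A).trace • 1 := by
  refine (le_smul_one_iff hA.mul_self).mpr fun u => ?_
  rw [← mulVec_mulVec, dotProduct_mulVec, ← mulVec_transpose, hA.eq]
  simpa [hA.eq] using mulVec_dotProduct_mulVec_le A u

lemma trace_mul_nonneg {S Y : Matrix n n ℝ} (hS : 0 ≤ S) (hY : 0 ≤ Y) :
    0 ≤ (S * Y).trace := by
  have hQ : (CFC.sqrt S).IsHermitian :=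
    (nonneg_iff_posSemidef.mp (CFC.sqrt_nonneg S)).isHermitian
  have hconj := (nonneg_iff_posSemidef.mp hY).conjTranspose_mul_mul_same (CFC.sqrt S)
  rw [hQ.eq] at hconj
  calc 0 ≤ (CFC.sqrt S * Y * CFC.sqrt S).trace := hconj.trace_nonneg
    _ = (S * Y).trace := by rw [trace_mul_cycle, CFC.sqrt_mul_sqrt_self S hS]

lemma trace_mul_le_of_le_smul_one {S X : Matrix n n ℝ} {c : ℝ} (hS : 0 ≤ S)
    (hX : X ≤ c • 1) : (S * X).trace ≤ c * S.trace := by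
  have := trace_mul_nonneg hS (sub_nonneg.mpr hX)
  rwa [Matrix.mul_sub, trace_sub, Matrix.mul_smul, Matrix.mul_one, trace_smul, smul_eq_mul,
    sub_nonneg] at this

lemma trace_mul_mul_self_le_sq {A : Matrix n n ℝ} (hA : A.IsSymm) :
    (A * A * (A * A)).trace ≤ (A * A).trace ^ 2 := by
  simpa [sq] using trace_mul_le_of_le_smul_one hA.mul_self_nonneg (mul_self_le_trace_smul_one hA)

lemma inv_le_smul_one_of_smul_one_le {T : Matrix n n ℝ} {δ : ℝ} (hδ : 0 < δ) (h : δ • 1 ≤ T) :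
    T⁻¹ ≤ δ⁻¹ • 1 := by
  have hT := posDef_of_smul_one_le hδ h
  rw [le_smul_one_iff (isHermitian_iff_isSymm.mp hT.inv.isHermitian)]
  intro u
  -- with `w = T⁻¹ u` the hypothesis reads `δ (w ⬝ w) ≤ w ⬝ u`; conclude by AM-GM
  set w := T⁻¹ *ᵥ u
  have hu : u = T *ᵥ w := by simp [w, mulVec_mulVec, mul_nonsing_inv _ hT.det_pos.ne'.isUnit]
  have hlow := (smul_one_le_iff (isHermitian_iff_isSymm.mp hT.isHermitian)).mp h w
  rw [← hu] at hlow
  have hsq : 0 ≤ (δ • w - u) ⬝ᵥ (δ • w - u) := by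
    simpa using dotProduct_star_self_nonneg (δ • w - u)
  simp only [dotProduct_sub, sub_dotProduct, dotProduct_smul, smul_dotProduct, smul_eq_mul,
    dotProduct_comm u w] at hsq
  rw [dotProduct_comm u w, inv_mul_eq_div, le_div_iff₀' hδ]
  nlinarith [mul_le_mul_of_nonneg_left hlow hδ.le]

lemma trace_inv_mul_inv_mul_le {T D : Matrix n n ℝ} {δ : ℝ} (hδ : 0 < δ) (hT : δ • 1 ≤ T)
    (hD : D.IsSymm) : (T⁻¹ * D * T⁻¹ * D).trace ≤ δ⁻¹ ^ 2 * (D * D).trace := by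
  have hTinv := inv_le_smul_one_of_smul_one_le hδ hT
  have hDTD : 0 ≤ D * T⁻¹ * D := by
    simpa [nonneg_iff_posSemidef, hD.eq] using
      (posDef_of_smul_one_le hδ hT).inv.posSemidef.conjTranspose_mul_mul_same D
  calc (T⁻¹ * D * T⁻¹ * D).trace = (D * T⁻¹ * D * T⁻¹).trace := by
        rw [trace_mul_cycle]; simp only [Matrix.mul_assoc]
    _ ≤ δ⁻¹ * (D * T⁻¹ * D).trace := trace_mul_le_of_le_smul_one hDTD hTinv
    _ = δ⁻¹ * (D * D * T⁻¹).trace := by rw [trace_mul_cycle]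
    _ ≤ δ⁻¹ * (δ⁻¹ * (D * D).trace) := by
        gcongr
        exact trace_mul_le_of_le_smul_one hD.mul_self_nonneg hTinv
    _ = δ⁻¹ ^ 2 * (D * D).trace := by ring

lemma inv_add_sub_two_eq {G : Matrix n n ℝ} (hG : IsUnit G.det) :
    G⁻¹ + G - 2 = G⁻¹ * ((1 - G) * (1 - G)) := by
  have h : G⁻¹ * (G * G) = G := by rw [← Matrix.mul_assoc, nonsing_inv_mul _ hG, Matrix.one_mul]
  rw [show (1 - G) * (1 - G) = 1 - G - G + G * G by noncomm_ring, Matrix.mul_add, Matrix.mul_sub,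
    Matrix.mul_sub, Matrix.mul_one, nonsing_inv_mul _ hG, h, ← one_add_one_eq_two]
  abel

lemma smul_one_le_of_trace_one_sub_mul_self_le {G : Matrix n n ℝ} (hG : G.IsSymm) {r : ℝ}
    (hr : 0 ≤ r) (h : ((1 - G) * (1 - G)).trace ≤ r ^ 2) : (1 - r) • 1 ≤ G :=
  calc (1 - r) • (1 : Matrix n n ℝ) = 1 - r • 1 := by rw [sub_smul, one_smul]
    _ ≤ 1 - (1 - G) :=
      sub_le_sub_left (le_smul_one_of_trace_mul_self_le (isSymm_one.sub hG) hr h) 1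
    _ = G := sub_sub_cancel 1 G

lemma trace_inv_add_sub_two_mul_self_le {G : Matrix n n ℝ} (hG : G.IsSymm) {r : ℝ} (hr0 : 0 ≤ r)
    (hr1 : r < 1) (h : ((1 - G) * (1 - G)).trace ≤ r ^ 2) :
    ((G⁻¹ + G - 2) * (G⁻¹ + G - 2)).trace ≤ (r ^ 2 / (1 - r)) ^ 2 := by
  have hGlow := smul_one_le_of_trace_one_sub_mul_self_le hG hr0 h
  have hGdet : IsUnit G.det := (posDef_of_smul_one_le (by linarith) hGlow).det_pos.ne'.isUnit
  have hE : (1 - G).IsSymm := isSymm_one.sub hG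
  have hEE := (nonneg_iff_posSemidef.mp hE.mul_self_nonneg).trace_nonneg
  rw [inv_add_sub_two_eq hGdet]
  calc (G⁻¹ * ((1 - G) * (1 - G)) * (G⁻¹ * ((1 - G) * (1 - G)))).trace
      = (G⁻¹ * ((1 - G) * (1 - G)) * G⁻¹ * ((1 - G) * (1 - G))).trace := by
        simp only [Matrix.mul_assoc]
    _ ≤ (1 - r)⁻¹ ^ 2 * ((1 - G) * (1 - G) * ((1 - G) * (1 - G))).trace :=
        trace_inv_mul_inv_mul_le (by linarith) hGlow hE.mul_self
    _ ≤ (1 - r)⁻¹ ^ 2 * (r ^ 2) ^ 2 := by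
        gcongr
        exact (trace_mul_mul_self_le_sq hE).trans (pow_le_pow_left₀ hEE h 2)
    _ = (r ^ 2 / (1 - r)) ^ 2 := by ring

theorem newton_step_bound {G D : Matrix n n ℝ} (hG : G.IsSymm) (hD : D.IsSymm) {r : ℝ}
    (hr0 : 0 ≤ r) (hr : r < 1 / 2) (hE : ((1 - G) * (1 - G)).trace ≤ r ^ 2)
    (hDR : (D * (D - (G⁻¹ + G - 2))).trace = 0) :
    ((1 - 2 * r) / (1 - r)) • 1 ≤ G - D ∧
      ((G - D)⁻¹ * D * (G - D)⁻¹ * D).trace ≤ (r ^ 2 / (1 - 2 * r)) ^ 2 := by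
  have hr1 : 0 < 1 - r := by linarith
  have hr2 : 0 < 1 - 2 * r := by linarith
  have hR : (G⁻¹ + G - 2).IsSymm := (hG.inv.add hG).sub (transpose_ofNat 2)
  have hD2 : (D * D).trace ≤ (r ^ 2 / (1 - r)) ^ 2 :=
    (trace_mul_self_le_of_trace_mul_sub_eq_zero (hD.sub hR) hDR).trans
      (trace_inv_add_sub_two_mul_self_le hG hr0 (by linarith) hE)
  have hT : ((1 - 2 * r) / (1 - r)) • 1 ≤ G - D :=
    calc ((1 - 2 * r) / (1 - r)) • (1 : Matrix n n ℝ) = (1 - r) • 1 - (r ^ 2 / (1 - r)) • 1 := by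
          rw [← sub_smul]; congr 1; field_simp; ring
      _ ≤ G - D := sub_le_sub (smul_one_le_of_trace_one_sub_mul_self_le hG hr0 hE)
          (le_smul_one_of_trace_mul_self_le hD (by positivity) hD2)
  refine ⟨hT, ?_⟩
  calc ((G - D)⁻¹ * D * (G - D)⁻¹ * D).trace
      ≤ ((1 - 2 * r) / (1 - r))⁻¹ ^ 2 * (D * D).trace :=
        trace_inv_mul_inv_mul_le (by positivity) hT hD
    _ ≤ ((1 - 2 * r) / (1 - r))⁻¹ ^ 2 * (r ^ 2 / (1 - r)) ^ 2 := by gcongr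
    _ = (r ^ 2 / (1 - 2 * r)) ^ 2 := by field_simp

end Matrix


lemma LinearMap.apply_eq_sum_single {ι R M : Type*} [Fintype ι] [DecidableEq ι] [CommSemiring R]
    [AddCommMonoid M] [Module R M] (f : (ι → R) →ₗ[R] M) (z : ι → R) :
    f z = ∑ i, z i • f (Pi.single i 1) := by
  conv_lhs => rw [pi_eq_sum_univ' z]
  simp [map_sum]

section Barrier

variable {U L : ℕ} (Lam : (Fin U → ℝ) →ₗ[ℝ] Matrix (Fin L) (Fin L) ℝ)

lemma dotProduct_hess_mulVec (p z w : Fin U → ℝ) :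
    z ⬝ᵥ hess Lam p *ᵥ w = ((Lam p)⁻¹ * Lam z * (Lam p)⁻¹ * Lam w).trace := by
  rw [Lam.apply_eq_sum_single z, Lam.apply_eq_sum_single w]
  simp only [Matrix.sum_mul, Matrix.mul_smul, Matrix.smul_mul, trace_sum, trace_smul, smul_eq_mul,
    dotProduct, mulVec, hess, of_apply, Finset.mul_sum]
  rw [Finset.sum_comm]
  exact Finset.sum_congr rfl fun i _ => Finset.sum_congr rfl fun j _ => by ring

lemma dotProduct_neg_grad (p z : Fin U → ℝ) :
    z ⬝ᵥ -grad Lam p = ((Lam p)⁻¹ * Lam z).trace := by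
  rw [Lam.apply_eq_sum_single z]
  simp [Matrix.mul_sum, trace_sum, dotProduct, grad]

lemma grad_mulLeftRight_comp {W : Matrix (Fin L) (Fin L) ℝ} (hW : IsUnit W.det) :
    grad (LinearMap.mulLeftRight ℝ (W, W) ∘ₗ Lam) = grad Lam := by
  ext p i
  simp only [grad, LinearMap.comp_apply, LinearMap.mulLeftRight_apply]
  rw [trace_inv_conj_mul_conj hW]

lemma hess_mulLeftRight_comp {W : Matrix (Fin L) (Fin L) ℝ} (hW : IsUnit W.det) :
    hess (LinearMap.mulLeftRight ℝ (W, W) ∘ₗ Lam) = hess Lam := by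
  ext p i j
  simp only [hess, of_apply, LinearMap.comp_apply, LinearMap.mulLeftRight_apply]
  rw [trace_inv_conj_mul_conj_mul_inv_conj_mul_conj hW]

lemma locNorm_mulLeftRight_comp {W : Matrix (Fin L) (Fin L) ℝ} (hW : IsUnit W.det) :
    locNorm (LinearMap.mulLeftRight ℝ (W, W) ∘ₗ Lam) = locNorm Lam := by
  ext p v
  rw [locNorm, locNorm, hess_mulLeftRight_comp Lam hW]

noncomputable def newtonIterate (x y : Fin U → ℝ) : Fin U → ℝ :=
  (2 : ℝ) • x - (hess Lam x)⁻¹ *ᵥ -grad Lam y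

variable {Lam} {x : Fin U → ℝ}

lemma dotProduct_hess_mulVec_of_eq_one (hx : Lam x = 1) (z w : Fin U → ℝ) :
    z ⬝ᵥ hess Lam x *ᵥ w = (Lam z * Lam w).trace := by
  simp [dotProduct_hess_mulVec, hx]

lemma isUnit_hess_det_of_eq_one (hinj : Function.Injective Lam) (hsym : ∀ v, (Lam v).IsSymm)
    (hx : Lam x = 1) : IsUnit (hess Lam x).det := by
  rw [← isUnit_iff_isUnit_det, ← mulVec_injective_iff_isUnit]
  refine (injective_iff_map_eq_zero (mulVecLin (hess Lam x))).mpr fun z hz => hinj ?_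
  have hzz : ((Lam z)ᴴ * Lam z).trace = 0 := by
    rw [conjTranspose_eq_transpose_of_trivial, (hsym z).eq, ← dotProduct_hess_mulVec_of_eq_one hx]
    simp [← mulVecLin_apply, hz]
  rw [trace_conjTranspose_mul_self_eq_zero_iff.mp hzz, map_zero]

lemma trace_mul_newton_direction (hx : Lam x = 1) (hH : IsUnit (hess Lam x).det)
    (y z : Fin U → ℝ) :
    (Lam z * Lam ((hess Lam x)⁻¹ *ᵥ -grad Lam y)).trace = ((Lam y)⁻¹ * Lam z).trace := by
  rw [← dotProduct_hess_mulVec_of_eq_one hx, mulVec_mulVec, mul_nonsing_inv _ hH, one_mulVec,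
    dotProduct_neg_grad]

theorem posDef_newtonIterate_and_locNorm_le_of_eq_one (hinj : Function.Injective Lam)
    (hsym : ∀ v, (Lam v).IsSymm) (hx : Lam x = 1) {y : Fin U → ℝ} {r : ℝ} (hr0 : 0 ≤ r)
    (hr : r < 1 / 2) (hxy : locNorm Lam x (x - y) ≤ r) :
    (Lam (newtonIterate Lam x y)).PosDef ∧
      locNorm Lam (newtonIterate Lam x y) (newtonIterate Lam x y - y) ≤ r ^ 2 / (1 - 2 * r) := by
  have hH := isUnit_hess_det_of_eq_one hinj hsym hx
  set v := (hess Lam x)⁻¹ *ᵥ -grad Lam y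
  set xp := newtonIterate Lam x y
  have hxp : Lam xp = 2 - Lam v := by simp [xp, newtonIterate, v, hx, two_smul, one_add_one_eq_two]
  set D := Lam (y - xp)
  have hE : ((1 - Lam y) * (1 - Lam y)).trace ≤ r ^ 2 := by
    rwa [← hx, ← map_sub, ← dotProduct_hess_mulVec_of_eq_one hx, ← Real.sqrt_le_left hr0]
  have hDR : (D * (D - ((Lam y)⁻¹ + Lam y - 2))).trace = 0 := by
    have : D - ((Lam y)⁻¹ + Lam y - 2) = Lam v - (Lam y)⁻¹ := by
      simp only [D, map_sub, hxp]; abel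
    rw [this, mul_sub, trace_sub, trace_mul_newton_direction hx hH, trace_mul_comm, sub_self]
  obtain ⟨hT, hbound⟩ := newton_step_bound (hsym y) (hsym _) hr0 hr hE hDR
  rw [show Lam y - D = Lam xp by simp [D]] at hT hbound
  refine ⟨posDef_of_smul_one_le (div_pos (by linarith) (by linarith)) hT, ?_⟩
  rw [locNorm, dotProduct_hess_mulVec, Real.sqrt_le_left (div_nonneg (sq_nonneg r) (by linarith))]
  have : Lam (xp - y) = -D := by simp [D]
  simpa only [this, Matrix.mul_neg, Matrix.neg_mul, neg_neg] using hbound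

end Barrier

theorem stmt12_general {U L : ℕ}
    (Lam : (Fin U → ℝ) →ₗ[ℝ] Matrix (Fin L) (Fin L) ℝ)
    (hinj : Function.Injective Lam) (hsym : ∀ v, (Lam v).IsSymm)
    (x y : Fin U → ℝ) (hx : (Lam x).PosDef)
    (s : Fin U → ℝ) (hs : s = -grad Lam y)
    (r : ℝ) (hr0 : 0 ≤ r) (hr : r < 1 / 3)
    (hxy : locNorm Lam x (x - y) ≤ r)
    (xp : Fin U → ℝ) (hxp : xp = (2 : ℝ) • x - (hess Lam x)⁻¹.mulVec s) :
    (Lam xp).PosDef ∧ locNorm Lam xp (xp - y) ≤ r ^ 2 / (1 - 2 * r) := by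
  obtain ⟨W, hWsym, hW, hWx⟩ := hx.exists_isSymm_mul_mul_eq_one
  have hWstar : star W = W := by
    rw [star_eq_conjTranspose, conjTranspose_eq_transpose_of_trivial, hWsym.eq]
  have hWunit : IsUnit W := (isUnit_iff_isUnit_det W).mpr hW
  set Φ := LinearMap.mulLeftRight ℝ (W, W) ∘ₗ Lam
  have hΦ (v : Fin U → ℝ) : Φ v = star W * Lam v * W := by rw [hWstar]; rfl
  have hΦinj : Function.Injective Φ := fun a b hab => hinj <| hWunit.mul_right_cancel <|
    hWunit.mul_left_cancel <| by simpa [hΦ, hWstar, Matrix.mul_assoc] using hab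
  have hΦsym (v : Fin U → ℝ) : (Φ v).IsSymm := by
    rw [hΦ, hWstar, IsSymm, transpose_mul, transpose_mul, hWsym.eq, (hsym v).eq, Matrix.mul_assoc]
  have hxpΦ : xp = newtonIterate Φ x y := by
    rw [hxp, hs, newtonIterate, hess_mulLeftRight_comp Lam hW, grad_mulLeftRight_comp Lam hW]
  obtain ⟨hpd, hnorm⟩ := posDef_newtonIterate_and_locNorm_le_of_eq_one hΦinj hΦsym hWx hr0
    (by linarith) (by rwa [locNorm_mulLeftRight_comp Lam hW])
  rw [← hxpΦ, hΦ, Matrix.IsUnit.posDef_star_left_conjugate_iff hWunit] at hpd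
  rw [← hxpΦ, locNorm_mulLeftRight_comp Lam hW] at hnorm
  exact ⟨hpd, hnorm⟩

/-- the Newton iterate `x₊ = 2x − H(x)⁻¹s` (with `s = -g(y)`)
satisfies `Λ(x₊) ≻ 0` and `‖x₊ − y‖_{x₊} ≤ r²/(1 − 2r)` if `‖x − y‖_x ≤ r < 1/3`. -/
theorem stmt12 {U L : ℕ} (hU : 0 < U) (hL : 0 < L)
    (Lam : (Fin U → ℝ) →ₗ[ℝ] Matrix (Fin L) (Fin L) ℝ)
    (hinj : Function.Injective Lam) (hsym : ∀ v, (Lam v).IsSymm)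
    (x y : Fin U → ℝ) (hx : (Lam x).PosDef) (hy : (Lam y).PosDef)
    (s : Fin U → ℝ) (hs : s = -grad Lam y)
    (r : ℝ) (hr0 : 0 ≤ r) (hr : r < 1 / 3)
    (hxy : locNorm Lam x (x - y) ≤ r)
    (xp : Fin U → ℝ) (hxp : xp = (2 : ℝ) • x - (hess Lam x)⁻¹.mulVec s) :
    (Lam xp).PosDef ∧ locNorm Lam xp (xp - y) ≤ r ^ 2 / (1 - 2 * r) :=
  stmt12_general Lam hinj hsym x y hx s hs r hr0 hr hxy xp hxp
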